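/- arXiv:1207.0242 — 3 statements merged into one kernel-verified Lean document; each statement's English description precedes it below -/
import Mathlib

section
/- If Σ is a q×q real symmetric positive definite matrix all of whose diagonal entries equal one (a positive definite correlation matrix), then every diagonal entry of its inverse Σ^{-1} is greater than or equal to 1. -/
/-! Conjugating `S` by the symmetric matrix `t • 1 - S⁻¹` gives the positive semidefinite matrix
`t² S - 2t + S⁻¹`; its diagonal yields `2t - t² Sᵢᵢ ≤ (S⁻¹)ᵢᵢ` for every real `t`, and
`t = 1 / Sᵢᵢ` gives `(S⁻¹)ᵢᵢ ≥ 1 / Sᵢᵢ`, which is `1` for a correlation matrix. -/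

open Matrix

namespace Matrix.PosDef

variable {n : Type*} [Fintype n] [DecidableEq n] {S : Matrix n n ℝ}

theorem conjTranspose_smul_sub_inv_mul_mul (hS : S.PosDef) (t : ℝ) :
    (t • 1 - S⁻¹)ᴴ * S * (t • 1 - S⁻¹) = (t ^ 2) • S - (2 * t) • 1 + S⁻¹ := by
  have hdet : IsUnit S.det := isUnit_iff_ne_zero.mpr hS.det_pos.ne'
  simp only [conjTranspose_sub, conjTranspose_smul, conjTranspose_one, hS.isHermitian.inv.eq,
    star_trivial, sub_mul, mul_sub, smul_mul_assoc, mul_smul_comm, one_mul, mul_one,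
    nonsing_inv_mul S hdet, mul_nonsing_inv S hdet]
  module

theorem two_mul_sub_sq_mul_diag_le_inv_diag (hS : S.PosDef) (t : ℝ) (i : n) :
    2 * t - t ^ 2 * S i i ≤ S⁻¹ i i := by
  have hpsd := hS.posSemidef.conjTranspose_mul_mul_same (t • 1 - S⁻¹)
  rw [hS.conjTranspose_smul_sub_inv_mul_mul t] at hpsd
  have := hpsd.diag_nonneg (i := i)
  simp only [add_apply, sub_apply, smul_apply, one_apply_eq, smul_eq_mul, mul_one] at this
  linarith

theorem inv_diag_le_diag_inv (hS : S.PosDef) (i : n) : (S i i)⁻¹ ≤ S⁻¹ i i := by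
  have hpos : 0 < S i i := hS.diag_pos
  have := hS.two_mul_sub_sq_mul_diag_le_inv_diag (S i i)⁻¹ i
  field_simp at this
  rw [inv_le_iff_one_le_mul₀' hpos]
  linarith

end Matrix.PosDef

/-- Diagonal of an inverted correlation matrix (Lemma 2): if `S` is a positive
definite correlation matrix (symmetric positive definite with unit diagonal),
then every diagonal entry of `S⁻¹` is at least `1`. -/
theorem stmt1 {q : ℕ} (S : Matrix (Fin q) (Fin q) ℝ) (hS : S.PosDef)
    (hdiag : ∀ i, S i i = 1) : ∀ i, 1 ≤ S⁻¹ i i := by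
  intro i
  simpa [hdiag i] using hS.inv_diag_le_diag_inv i
end

section
/- Let A = (a_{ij}) and B = (b_{ij}) be real symmetric 2×2 matrices. If A is positive definite with a_{11} ≥ 1 and a_{22} ≥ 1, and ‖A − B‖_∞ < δ for some δ with 0 < δ < 1, then |a_{12}/√(a_{11} a_{22}) − b_{12}/√(b_{11} b_{22})| < 2δ/(1−δ). -/
/-!
Put `s = √(a₁₁a₂₂) ≥ 1` and `t = √(b₁₁b₂₂)`. Because `aᵢᵢ ≥ 1`, an entrywise error below `δ`
is a relative error below `δ` on the diagonal, so `|t - s| < δ s`; positive definiteness gives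
`|a₁₂| ≤ s`. Then `a₁₂ t - b₁₂ s = a₁₂ (t - s) + (a₁₂ - b₁₂) s` has absolute value below
`δ s (s + 1)`, and dividing by `s t > (1 - δ) s²` leaves `δ (s + 1) / ((1 - δ) s) ≤ 2δ / (1 - δ)`.
-/

open Matrix

/-- Entrywise maximum norm of a square real matrix. -/
noncomputable def supNorm {q : ℕ} (A : Matrix (Fin q) (Fin q) ℝ) : ℝ :=
  ⨆ i, ⨆ j, |A i j|

lemma abs_apply_le_supNorm {q : ℕ} (M : Matrix (Fin q) (Fin q) ℝ) (i j : Fin q) :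
    |M i j| ≤ supNorm M :=
  (le_ciSup (Set.finite_range _).bddAbove j).trans
    (le_ciSup (f := fun i => ⨆ j, |M i j|) (Set.finite_range _).bddAbove i)

lemma Matrix.PosDef.apply_zero_one_sq_lt {A : Matrix (Fin 2) (Fin 2) ℝ} (hA : A.PosDef) :
    A 0 1 ^ 2 < A 0 0 * A 1 1 := by
  have hsymm : A 1 0 = A 0 1 := by simpa using congrFun (congrFun hA.isHermitian 0) 1
  have hdet := hA.det_pos
  rw [det_fin_two, hsymm] at hdet
  linarith

lemma abs_sqrt_mul_sub_sqrt_mul_lt {a d b₁ b₂ δ : ℝ} (ha : 0 < a) (hd : 0 < d) (hδ : δ < 1)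
    (h₁ : |b₁ - a| < δ * a) (h₂ : |b₂ - d| < δ * d) :
    |√(b₁ * b₂) - √(a * d)| < δ * √(a * d) := by
  have hδ₀ : 0 < δ := pos_of_mul_pos_left ((abs_nonneg _).trans_lt h₁) ha.le
  rw [abs_lt] at h₁ h₂
  have hlower : (1 - δ) ^ 2 * (a * d) < b₁ * b₂ := by
    rw [show (1 - δ) ^ 2 * (a * d) = (1 - δ) * a * ((1 - δ) * d) by ring]
    exact mul_lt_mul'' (by linarith) (by linarith) (by nlinarith) (by nlinarith)
  have hupper : b₁ * b₂ < (1 + δ) ^ 2 * (a * d) := by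
    rw [show (1 + δ) ^ 2 * (a * d) = (1 + δ) * a * ((1 + δ) * d) by ring]
    exact mul_lt_mul'' (by linarith) (by linarith) (by nlinarith) (by nlinarith)
  have hs := Real.sq_sqrt (mul_pos ha hd).le
  have hs₀ := Real.sqrt_pos.mpr (mul_pos ha hd)
  rw [abs_lt]
  constructor
  · have : (1 - δ) * √(a * d) < √(b₁ * b₂) :=
      (Real.lt_sqrt (by nlinarith)).mpr (by rw [mul_pow, hs]; linarith)
    linarith
  · have : √(b₁ * b₂) < (1 + δ) * √(a * d) :=
      (Real.sqrt_lt' (by positivity)).mpr (by rw [mul_pow, hs]; linarith)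
    linarith

lemma abs_div_sub_div_lt {c e s t δ : ℝ} (hδ : δ < 1) (hs : 1 ≤ s) (hcs : |c| ≤ s)
    (hts : |t - s| < δ * s) (hce : |c - e| < δ) :
    |c / s - e / t| < 2 * δ / (1 - δ) := by
  have hδ₀ : 0 < δ := (abs_nonneg _).trans_lt hce
  have hs₀ : 0 < s := one_pos.trans_le hs
  have ht : (1 - δ) * s < t := by linarith [(abs_lt.mp hts).1]
  have ht₀ : 0 < t := lt_of_le_of_lt (mul_nonneg (by linarith) hs₀.le) ht
  have hnum : |c * t - e * s| < δ * s * (s + 1) :=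
    calc |c * t - e * s| = |c * (t - s) + (c - e) * s| := by ring_nf
      _ ≤ |c| * |t - s| + |c - e| * s := by
        rw [← abs_of_pos hs₀, ← abs_mul, ← abs_mul, abs_of_pos hs₀]; exact abs_add_le _ _
      _ < s * (δ * s) + δ * s :=
        add_lt_add_of_le_of_lt (mul_le_mul hcs hts.le (abs_nonneg _) hs₀.le)
          (mul_lt_mul_of_pos_right hce hs₀)
      _ = δ * s * (s + 1) := by ring
  rw [div_sub_div _ _ hs₀.ne' ht₀.ne', abs_div, abs_of_pos (mul_pos hs₀ ht₀), mul_comm s e,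
    div_lt_div_iff₀ (mul_pos hs₀ ht₀) (by linarith)]
  calc |c * t - e * s| * (1 - δ) < δ * s * (s + 1) * (1 - δ) := by gcongr
    _ ≤ δ * s * (2 * s) * (1 - δ) := by gcongr; linarith
    _ = 2 * δ * (s * ((1 - δ) * s)) := by ring
    _ ≤ 2 * δ * (s * t) := by gcongr

theorem stmt2_general (A B : Matrix (Fin 2) (Fin 2) ℝ) (hA : A.PosDef) (h11 : 1 ≤ A 0 0) (h22 : 1 ≤ A 1 1)
    (δ : ℝ) (hδ0 : 0 < δ) (hδ1 : δ < 1) (hAB : supNorm (A - B) < δ) :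
    |A 0 1 / Real.sqrt (A 0 0 * A 1 1) - B 0 1 / Real.sqrt (B 0 0 * B 1 1)| <
      2 * δ / (1 - δ) := by
  have hentry (i j : Fin 2) : |A i j - B i j| < δ :=
    (abs_apply_le_supNorm (A - B) i j).trans_lt hAB
  have hrel (i : Fin 2) (hi : 1 ≤ A i i) : |B i i - A i i| < δ * A i i := by
    rw [abs_sub_comm]
    exact (hentry i i).trans_le (le_mul_of_one_le_right hδ0.le hi)
  apply abs_div_sub_div_lt hδ1 (Real.one_le_sqrt.mpr (one_le_mul_of_one_le_of_one_le h11 h22))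
    (Real.abs_le_sqrt hA.apply_zero_one_sq_lt.le)
    (abs_sqrt_mul_sub_sqrt_mul_lt (by linarith) (by linarith) hδ1 (hrel 0 h11) (hrel 1 h22))
    (hentry 0 1)

/-- Error in partial correlations (Lemma 3): if `A`, `B` are symmetric `2 × 2`
matrices, `A` positive definite with `a₁₁, a₂₂ ≥ 1`, and `‖A - B‖_∞ < δ < 1`, then
`|a₁₂/√(a₁₁a₂₂) - b₁₂/√(b₁₁b₂₂)| < 2δ/(1-δ)`. -/
theorem stmt2 (A B : Matrix (Fin 2) (Fin 2) ℝ) (hA : A.PosDef) (hAsymm : A.IsSymm)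
    (hBsymm : B.IsSymm) (h11 : 1 ≤ A 0 0) (h22 : 1 ≤ A 1 1)
    (δ : ℝ) (hδ0 : 0 < δ) (hδ1 : δ < 1) (hAB : supNorm (A - B) < δ) :
    |A 0 1 / Real.sqrt (A 0 0 * A 1 1) - B 0 1 / Real.sqrt (B 0 0 * B 1 1)| <
      2 * δ / (1 - δ) :=
  stmt2_general A B hA h11 h22 δ hδ0 hδ1 hAB
end

section
/- Define γ(n, s, z) = (exp(z/√(n − s − 3)) − 1)/(exp(z/√(n − s − 3)) + 1). Let c ∈ [0, 1], let q ≥ 0 and n be integers with n > q + 3, and set z_n = √(n − 3) · log((1 + c/3)/(1 − c/3)). Then γ(n, q, z_n) − γ(n, 0, z_n) ≤ (log(2)/2) · c · (√(n − 3)/√(n − q − 3) − 1). -/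
/-! `γ(n, s, z) = tanh (z / (2 √(n - s - 3)))` and `tanh` is 1-Lipschitz, so with
`a = log ((1 + c/3)/(1 - c/3))` and `t = √(n-3)/√(n-q-3) ≥ 1` the difference is at most
`(t - 1) a / 2`. The map `x ↦ log ((1 + x)/(1 - x))` is convex on `[0, 1)`, vanishes at `0` and
equals `log 2` at `1/3`, whence `a ≤ c log 2`. -/

/-- The threshold of the sample-size-adjusted test:
`γ(n, s, z) = (exp(z/√(n-s-3)) - 1)/(exp(z/√(n-s-3)) + 1)`. -/
noncomputable def gammaThresh (n s z : ℝ) : ℝ :=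
  (Real.exp (z / Real.sqrt (n - s - 3)) - 1) /
    (Real.exp (z / Real.sqrt (n - s - 3)) + 1)

open Real Set

namespace Real

theorem hasDerivAt_tanh (x : ℝ) : HasDerivAt tanh (1 / cosh x ^ 2) x := by
  have h := (hasDerivAt_sinh x).div (hasDerivAt_cosh x) (cosh_pos x).ne'
  rw [show sinh / cosh = tanh from funext fun y => (tanh_eq_sinh_div_cosh y).symm] at h
  refine h.congr_deriv ?_
  rw [← cosh_sq_sub_sinh_sq x]
  ring

theorem tanh_sub_tanh_le {a b : ℝ} (hab : a ≤ b) : tanh b - tanh a ≤ b - a := by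
  have hmono : Monotone fun x => x - tanh x := by
    refine monotone_of_hasDerivAt_nonneg (fun x => (hasDerivAt_id x).sub (hasDerivAt_tanh x))
      fun x => ?_
    have := one_le_cosh x
    simp only [Pi.zero_apply, sub_nonneg]
    rw [div_le_one (by positivity)]
    nlinarith
  linarith [hmono hab]

theorem exp_sub_one_div_exp_add_one (x : ℝ) : (exp x - 1) / (exp x + 1) = tanh (x / 2) := by
  have hx : exp x = exp (x / 2) * exp (x / 2) := by rw [← exp_add, add_halves]
  have hpos := exp_pos (x / 2)
  rw [tanh_eq, exp_neg, hx]
  field_simp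

theorem convexOn_log_one_add_sub_log_one_sub :
    ConvexOn ℝ (Ico 0 1) fun x => log (1 + x) - log (1 - x) := by
  refine convexOn_of_hasDerivWithinAt2_nonneg (convex_Ico 0 1)
    (f' := fun x => (1 + x)⁻¹ + (1 - x)⁻¹) (f'' := fun x => ((1 - x) ^ 2)⁻¹ - ((1 + x) ^ 2)⁻¹)
    ?_ ?_ ?_ ?_
  · refine ContinuousOn.sub (ContinuousOn.log (by fun_prop) ?_) (ContinuousOn.log (by fun_prop) ?_)
    all_goals intro x hx; linarith [hx.1, hx.2]
  · intro x hx
    rw [interior_Ico] at hx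
    have h := (((hasDerivAt_id' x).const_add 1).log (by linarith [hx.1])).sub
      (((hasDerivAt_id' x).const_sub 1).log (by linarith [hx.2]))
    exact (h.congr_deriv (by ring)).hasDerivWithinAt
  · intro x hx
    rw [interior_Ico] at hx
    have h := (((hasDerivAt_id' x).const_add 1).inv (by linarith [hx.1])).add
      (((hasDerivAt_id' x).const_sub 1).inv (by linarith [hx.2]))
    exact (h.congr_deriv (by ring)).hasDerivWithinAt
  · intro x hx
    rw [interior_Ico] at hx
    have h1 : 0 < 1 - x := by linarith [hx.2]
    exact sub_nonneg.2 (inv_anti₀ (by positivity) (by nlinarith [hx.1]))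

theorem log_one_add_mul_div_one_sub_mul_le {a t : ℝ} (ha0 : 0 ≤ a) (ha1 : a < 1) (ht0 : 0 ≤ t)
    (ht1 : t ≤ 1) : log ((1 + t * a) / (1 - t * a)) ≤ t * log ((1 + a) / (1 - a)) := by
  have hta : t * a ≤ a := mul_le_of_le_one_left ha0 ht1
  have key := convexOn_log_one_add_sub_log_one_sub.2 (left_mem_Ico.2 one_pos) ⟨ha0, ha1⟩
    (sub_nonneg.2 ht1) ht0 (sub_add_cancel 1 t)
  simp only [smul_eq_mul, mul_zero, zero_add, add_zero, sub_zero, log_one] at key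
  rw [log_div (by nlinarith) (by linarith), log_div (by linarith) (by linarith)]
  linarith

end Real

theorem gammaThresh_eq_tanh (n s z : ℝ) : gammaThresh n s z = tanh (z / √(n - s - 3) / 2) :=
  exp_sub_one_div_exp_add_one _

/-- For `c ∈ [0,1]`, integers `q ≥ 0` and `n > q + 3`, and
`zₙ = √(n-3) · log((1 + c/3)/(1 - c/3))`, one has
`γ(n, q, zₙ) - γ(n, 0, zₙ) ≤ (log 2 / 2) · c · (√(n-3)/√(n-q-3) - 1)`. -/
theorem stmt12 (c : ℝ) (hc0 : 0 ≤ c) (hc1 : c ≤ 1) (q n : ℕ) (hn : q + 3 < n) :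
    gammaThresh (n : ℝ) (q : ℝ)
        (Real.sqrt ((n : ℝ) - 3) * Real.log ((1 + c / 3) / (1 - c / 3))) -
      gammaThresh (n : ℝ) 0
        (Real.sqrt ((n : ℝ) - 3) * Real.log ((1 + c / 3) / (1 - c / 3))) ≤
      Real.log 2 / 2 * c *
        (Real.sqrt ((n : ℝ) - 3) / Real.sqrt ((n : ℝ) - (q : ℝ) - 3) - 1) := by
  have hn' : (q : ℝ) + 3 < n := by exact_mod_cast hn
  have hsqrt : 0 < √((n : ℝ) - 3) := sqrt_pos.2 (by linarith [q.cast_nonneg (α := ℝ)])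
  set a := log ((1 + c / 3) / (1 - c / 3))
  set t := √((n : ℝ) - 3) / √((n : ℝ) - q - 3)
  have ha : 0 ≤ a := log_nonneg ((le_div_iff₀ (by linarith)).2 (by linarith))
  have ht : 1 ≤ t :=
    (one_le_div (sqrt_pos.2 (by linarith))).2 (sqrt_le_sqrt (by linarith [q.cast_nonneg (α := ℝ)]))
  have hlog : a ≤ c * log 2 := by
    have := log_one_add_mul_div_one_sub_mul_le (a := 1 / 3) (by norm_num) (by norm_num) hc0 hc1
    norm_num [← div_eq_mul_one_div] at this
    exact this
  rw [gammaThresh_eq_tanh, gammaThresh_eq_tanh, sub_zero, mul_div_cancel_left₀ _ hsqrt.ne',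
    mul_div_right_comm]
  calc tanh (t * a / 2) - tanh (a / 2) ≤ t * a / 2 - a / 2 := tanh_sub_tanh_le (by nlinarith)
    _ = (t - 1) * a / 2 := by ring
    _ ≤ (t - 1) * (c * log 2) / 2 := by gcongr
    _ = log 2 / 2 * c * (t - 1) := by ring
end
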